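/- Fix L ≥ 1, dimensions d_0,…,d_L and n ≥ 1, a fixed input A_0 ∈ ℝ^{d_0×n}, twice continuously differentiable maps Φ_ℓ : ℝ^{d_1×n}×…×ℝ^{d_ℓ×n} → ℝ^{d_ℓ×n} for ℓ = 1,…,L, and a twice continuously differentiable loss f : ℝ^{d_1×n}×…×ℝ^{d_L×n} → ℝ. For W = (W_1,…,W_L) with W_ℓ ∈ ℝ^{d_ℓ×d_{ℓ−1}}, define recursively X_ℓ(W) := W_ℓ A_{ℓ−1}(W) and A_ℓ(W) := Φ_ℓ(X_1(W),…,X_ℓ(W)), and set 𝓛(W) := f(X_1(W),…,X_L(W)). Fix W, write X := (X_1(W),…,X_L(W)), and define J_{Φ,ℓ} := sup_{‖U‖_F=1}‖DΦ_ℓ(X_1,…,X_ℓ)[U]‖_F, H_{Φ,ℓ} := sup_{‖U‖_F=1}‖D²Φ_ℓ(X_1,…,X_ℓ)[U,U]‖_F, J_Φ := max_ℓ J_{Φ,ℓ}, H_Φ := max_ℓ H_{Φ,ℓ}, J_f := ‖∇f(X)‖_F, H_f := sup_{‖U‖_F=1}|D²f(X)[U,U]|, W_* := max_ℓ ‖W_ℓ‖_op,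 Γ := √2·(1+2J_Φ²W_*²)^{L/2}, and Θ := (1+J_Φ W_*)^{L−1}. Then, for C_F := Γ²H_f + J_f Θ W_* H_Φ Γ² L + J_f² Θ Γ² L and C_op := Θ J_Φ², every perturbation ΔW = (ΔW_1,…,ΔW_L) satisfies |⟨ΔW, ∇²𝓛(W)·ΔW⟩| ≤ C_F·Σ_{ℓ=1}^L ‖ΔW_ℓ A_{ℓ−1}(W)‖_F² + C_op·Σ_{ℓ=1}^L ‖ΔW_ℓ‖_op². -/

import Mathlib

noncomputable section

/-- Spectral (largest-singular-value) norm of a real matrix. -/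
def opNormM {a b : ℕ} (A : Matrix (Fin a) (Fin b) ℝ) : ℝ :=
  ‖LinearMap.toContinuousLinearMap (Matrix.toEuclideanLin A)‖

/-- The space of tuples `(X_1,…,X_L)` of preactivations, `X_ℓ ∈ ℝ^{d_ℓ×n}`; here the number of
layers is `L = L₀ + 1` and `dims ℓ = d_ℓ` for `ℓ = 0,…,L`. -/
abbrev XTup (L₀ n : ℕ) (dims : Fin (L₀ + 2) → ℕ) : Type :=
  ∀ i : Fin (L₀ + 1), Fin (dims i.succ) → Fin n → ℝ

/-- The space of weight tuples `(W_1,…,W_L)`, `W_ℓ ∈ ℝ^{d_ℓ×d_{ℓ−1}}`. -/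
abbrev WTup (L₀ : ℕ) (dims : Fin (L₀ + 2) → ℕ) : Type :=
  ∀ ℓ : Fin (L₀ + 1), Fin (dims ℓ.succ) → Fin (dims ℓ.castSucc) → ℝ

/-- Frobenius norm of a tuple of matrices: square root of the sum of all squared entries. -/
def tupNorm {L₀ n : ℕ} {dims : Fin (L₀ + 2) → ℕ} (U : XTup L₀ n dims) : ℝ :=
  Real.sqrt (∑ ℓ, ∑ i, ∑ j, (U ℓ i j) ^ 2)

/-- Frobenius norm of a single matrix (as a function). -/
def matFrobNorm {a b : ℕ} (M : Fin a → Fin b → ℝ) : ℝ :=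
  Real.sqrt (∑ i, ∑ j, (M i j) ^ 2)

/-!
Differentiate along the line `t ↦ W + t • ΔW`. As `𝓛 = f ∘ X`, the Hessian form is
`D²f(X)[Ẋ, Ẋ] + Df(X)[Ẍ]`, and the tangents obey the layer recursions
`Ẋ_ℓ = ΔW_ℓ A_{ℓ-1} + W_ℓ Ȧ_{ℓ-1}`, `Ȧ_ℓ = DΦ_ℓ[Ẋ]` and
`Ẍ_ℓ = 2 ΔW_ℓ Ȧ_{ℓ-1} + W_ℓ Ä_{ℓ-1}`, `Ä_ℓ = D²Φ_ℓ[Ẋ, Ẋ] + DΦ_ℓ[Ẍ]`.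
Because `Φ_ℓ` only sees the layers `≤ ℓ`, `Ȧ_{ℓ-1}` and `Ä_{ℓ-1}` are controlled by the earlier
layers of `Ẋ` and `Ẍ`, so a discrete Grönwall inequality solves both recursions:
`‖Ẋ‖² ≤ Γ² Σ ‖ΔW_ℓ A_{ℓ-1}‖²` and `‖Ẍ‖ ≤ Θ Σ (2 J_Φ ‖ΔW_ℓ‖_op ‖Ẋ‖ + W_* H_Φ ‖Ẋ‖²)`.
AM-GM on the cross terms `J_f J_Φ ‖ΔW_ℓ‖_op ‖Ẋ‖` then produces `C_F` and `C_op`.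
-/

open Finset

section FrobeniusNorm

variable {a b c : ℕ}

def matEuclideanEquiv : (Fin a → Fin b → ℝ) ≃ₗ[ℝ] EuclideanSpace ℝ (Fin a × Fin b) :=
  (LinearEquiv.curry ℝ ℝ (Fin a) (Fin b)).symm.trans (WithLp.linearEquiv 2 ℝ _).symm

lemma matFrobNorm_eq_norm (M : Fin a → Fin b → ℝ) : matFrobNorm M = ‖matEuclideanEquiv M‖ := by
  simp [EuclideanSpace.norm_eq, matFrobNorm, Fintype.sum_prod_type, matEuclideanEquiv]

lemma matFrobNorm_nonneg (M : Fin a → Fin b → ℝ) : 0 ≤ matFrobNorm M :=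
  Real.sqrt_nonneg _

lemma matFrobNorm_sq (M : Fin a → Fin b → ℝ) : matFrobNorm M ^ 2 = ∑ i, ∑ j, M i j ^ 2 :=
  Real.sq_sqrt (by positivity)

lemma matFrobNorm_add_le (M B : Fin a → Fin b → ℝ) :
    matFrobNorm (M + B) ≤ matFrobNorm M + matFrobNorm B := by
  simpa only [matFrobNorm_eq_norm, map_add] using norm_add_le _ _

lemma matFrobNorm_smul (r : ℝ) (M : Fin a → Fin b → ℝ) :
    matFrobNorm (r • M) = |r| * matFrobNorm M := by
  simp only [matFrobNorm_eq_norm, map_smul, norm_smul, Real.norm_eq_abs]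

lemma continuous_matFrobNorm : Continuous (matFrobNorm : (Fin a → Fin b → ℝ) → ℝ) := by
  rw [show matFrobNorm = fun M : Fin a → Fin b → ℝ => ‖matEuclideanEquiv M‖ from
    funext matFrobNorm_eq_norm]
  exact continuous_norm.comp
    (LinearMap.continuous_of_finiteDimensional (matEuclideanEquiv (a := a) (b := b)).toLinearMap :)

lemma opNormM_nonneg (M : Matrix (Fin a) (Fin b) ℝ) : 0 ≤ opNormM M :=
  norm_nonneg _

lemma matFrobNorm_mul_le (M : Fin a → Fin b → ℝ) (B : Fin b → Fin c → ℝ) :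
    matFrobNorm (fun i q => ∑ j, M i j * B j q) ≤ opNormM (Matrix.of M) * matFrobNorm B := by
  have hcol (q : Fin c) :
      ∑ i, (∑ j, M i j * B j q) ^ 2 ≤ opNormM (Matrix.of M) ^ 2 * ∑ j, B j q ^ 2 := by
    have h := pow_le_pow_left₀ (norm_nonneg _)
      ((LinearMap.toContinuousLinearMap (Matrix.toEuclideanLin (Matrix.of M))).le_opNorm
        (WithLp.toLp 2 fun j => B j q)) 2
    simpa [mul_pow, EuclideanSpace.norm_sq_eq, opNormM, Matrix.mulVec, dotProduct] using h
  rw [matFrobNorm, matFrobNorm, ← Real.sqrt_sq (opNormM_nonneg (Matrix.of M)),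
    ← Real.sqrt_mul (sq_nonneg _), sum_comm, sum_comm (f := fun j q => B j q ^ 2), mul_sum]
  exact Real.sqrt_le_sqrt (sum_le_sum fun q _ => hcol q)

end FrobeniusNorm

section TupleNorm

variable {L₀ n : ℕ} {dims : Fin (L₀ + 2) → ℕ}

def tupEuclideanEquiv : XTup L₀ n dims ≃ₗ[ℝ]
    PiLp 2 fun ℓ : Fin (L₀ + 1) => EuclideanSpace ℝ (Fin (dims ℓ.succ) × Fin n) :=
  (LinearEquiv.piCongrRight fun _ => matEuclideanEquiv).trans (WithLp.linearEquiv 2 ℝ _).symm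

lemma tupNorm_nonneg (U : XTup L₀ n dims) : 0 ≤ tupNorm U :=
  Real.sqrt_nonneg _

lemma tupNorm_sq (U : XTup L₀ n dims) : tupNorm U ^ 2 = ∑ ℓ, matFrobNorm (U ℓ) ^ 2 := by
  simp only [tupNorm, matFrobNorm]
  rw [Real.sq_sqrt (by positivity)]
  exact sum_congr rfl fun ℓ _ => (Real.sq_sqrt (by positivity)).symm

lemma tupNorm_eq_norm (U : XTup L₀ n dims) : tupNorm U = ‖tupEuclideanEquiv U‖ := by
  rw [← sq_eq_sq₀ (tupNorm_nonneg U) (norm_nonneg _), tupNorm_sq, PiLp.norm_sq_eq_of_L2]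
  simp [matFrobNorm_eq_norm, tupEuclideanEquiv]

lemma tupNorm_ite_sq (p : Fin (L₀ + 1) → Prop) [DecidablePred p] (U : XTup L₀ n dims) :
    tupNorm (fun k => if p k then U k else 0) ^ 2 = ∑ k with p k, matFrobNorm (U k) ^ 2 := by
  rw [tupNorm_sq, sum_filter]
  refine sum_congr rfl fun k _ => ?_
  split_ifs <;> simp [matFrobNorm]

lemma tupNorm_ite_le (p : Fin (L₀ + 1) → Prop) [DecidablePred p] (U : XTup L₀ n dims) :
    tupNorm (fun k => if p k then U k else 0) ≤ tupNorm U := by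
  rw [← pow_le_pow_iff_left₀ (tupNorm_nonneg _) (tupNorm_nonneg _) two_ne_zero, tupNorm_ite_sq,
    tupNorm_sq]
  exact sum_le_sum_of_subset_of_nonneg (filter_subset _ _) fun _ _ _ => sq_nonneg _

lemma tupNorm_le_sum (U : XTup L₀ n dims) : tupNorm U ≤ ∑ ℓ, matFrobNorm (U ℓ) := by
  rw [← pow_le_pow_iff_left₀ (tupNorm_nonneg _) (sum_nonneg fun ℓ _ => matFrobNorm_nonneg _)
    two_ne_zero, tupNorm_sq]
  exact sum_sq_le_sq_sum_of_nonneg fun ℓ _ => matFrobNorm_nonneg _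

lemma tupNorm_ite_lt_sq (ℓ : Fin (L₀ + 1)) (U : XTup L₀ n dims) :
    tupNorm (fun k => if k < ℓ then U k else 0) ^ 2 = ∑ k ∈ Iio ℓ, matFrobNorm (U k) ^ 2 := by
  rw [tupNorm_ite_sq, filter_gt_eq_Iio]

lemma tupNorm_ite_lt_le_sum (ℓ : Fin (L₀ + 1)) (U : XTup L₀ n dims) :
    tupNorm (fun k => if k < ℓ then U k else 0) ≤ ∑ k ∈ Iio ℓ, matFrobNorm (U k) := by
  rw [← pow_le_pow_iff_left₀ (tupNorm_nonneg _) (sum_nonneg fun _ _ => matFrobNorm_nonneg _)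
    two_ne_zero, tupNorm_ite_lt_sq]
  exact sum_sq_le_sq_sum_of_nonneg fun _ _ => matFrobNorm_nonneg _

end TupleNorm

lemma le_sSup_image_sphere_mul_norm_pow {F : Type*} [NormedAddCommGroup F] [NormedSpace ℝ F]
    {g : F → ℝ} {k : ℕ} (hk : k ≠ 0) (hbdd : BddAbove (g '' Metric.sphere 0 1))
    (hhom : ∀ r : ℝ, 0 ≤ r → ∀ V, g (r • V) = r ^ k * g V) (V : F) :
    g V ≤ sSup (g '' Metric.sphere 0 1) * ‖V‖ ^ k := by
  rcases eq_or_ne V 0 with rfl | hV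
  · simpa [hk] using (hhom 0 le_rfl 0).le
  have hV' : 0 < ‖V‖ := norm_pos_iff.2 hV
  have hunit : ‖V‖⁻¹ • V ∈ Metric.sphere (0 : F) 1 := by simp [norm_smul, hV'.ne']
  calc g V = ‖V‖ ^ k * g (‖V‖⁻¹ • V) := by
        rw [← hhom _ hV'.le, smul_smul, mul_inv_cancel₀ hV'.ne', one_smul]
    _ ≤ ‖V‖ ^ k * sSup (g '' Metric.sphere 0 1) :=
        mul_le_mul_of_nonneg_left (le_csSup hbdd ⟨_, hunit, rfl⟩) (by positivity)
    _ = _ := mul_comm _ _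

section SphereSup

variable {L₀ n : ℕ} {dims : Fin (L₀ + 2) → ℕ}

def sphereSup (g : XTup L₀ n dims → ℝ) : ℝ :=
  sSup (g '' {U | tupNorm U = 1})

lemma sphereSup_nonneg {g : XTup L₀ n dims → ℝ} (hg : ∀ U, 0 ≤ g U) : 0 ≤ sphereSup g :=
  Real.sSup_nonneg (by rintro _ ⟨U, -, rfl⟩; exact hg U)

lemma le_sphereSup_mul_tupNorm_pow {g : XTup L₀ n dims → ℝ} (hg : Continuous g) {k : ℕ}
    (hk : k ≠ 0) (hhom : ∀ r : ℝ, 0 ≤ r → ∀ U, g (r • U) = r ^ k * g U) (U : XTup L₀ n dims) :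
    g U ≤ sphereSup g * tupNorm U ^ k := by
  set e := tupEuclideanEquiv (L₀ := L₀) (n := n) (dims := dims)
  have hsphere : g '' {U | tupNorm U = 1} = (g ∘ e.symm) '' Metric.sphere 0 1 := by
    rw [Set.image_comp, LinearEquiv.image_symm_eq_preimage]
    simp [Set.preimage, tupNorm_eq_norm, e]
  have hcont : Continuous (g ∘ e.symm) :=
    hg.comp (LinearMap.continuous_of_finiteDimensional e.symm.toLinearMap :)
  have h := le_sSup_image_sphere_mul_norm_pow hk ((isCompact_sphere 0 1).image hcont).bddAbove
    (fun r hr V => by simp [hhom r hr]) (e U)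
  rw [sphereSup, hsphere, tupNorm_eq_norm]
  simpa using h

lemma iSup_sphereSup_nonneg_and_le_mul {ι : Type*} [Finite ι] [Nonempty ι]
    {g : ι → XTup L₀ n dims → ℝ} {N : XTup L₀ n dims → ℝ} (hg0 : ∀ i U, 0 ≤ g i U)
    (hN : ∀ U, 0 ≤ N U) (hg : ∀ i U, g i U ≤ sphereSup (g i) * N U) {c : ι → ℝ} {C : ℝ}
    (hc : ∀ i, c i = sphereSup (g i)) (hC : C = ⨆ i, c i) :
    0 ≤ C ∧ ∀ i U, g i U ≤ C * N U := by
  have hle (i : ι) : sphereSup (g i) ≤ C :=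
    (hc i).symm.trans_le (hC ▸ le_ciSup (Set.finite_range c).bddAbove i)
  obtain ⟨i₀⟩ := ‹Nonempty ι›
  exact ⟨(sphereSup_nonneg (hg0 i₀)).trans (hle i₀),
    fun i U => (hg i U).trans (mul_le_mul_of_nonneg_right (hle i) (hN U))⟩

variable {G : Type*} [NormedAddCommGroup G] [NormedSpace ℝ G] {ν : G → ℝ}

lemma apply_le_sphereSup_mul (hν : Continuous ν) (hνsmul : ∀ (r : ℝ) y, ν (r • y) = |r| * ν y)
    (T : XTup L₀ n dims →L[ℝ] G) (U : XTup L₀ n dims) :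
    ν (T U) ≤ sphereSup (fun U => ν (T U)) * tupNorm U := by
  simpa only [pow_one] using le_sphereSup_mul_tupNorm_pow (g := fun U => ν (T U))
    (hν.comp T.continuous) one_ne_zero
    (fun r hr U => by simp [hνsmul, abs_of_nonneg hr]) U

lemma apply_apply_le_sphereSup_mul (hν : Continuous ν)
    (hνsmul : ∀ (r : ℝ) y, ν (r • y) = |r| * ν y)
    (B : XTup L₀ n dims →L[ℝ] XTup L₀ n dims →L[ℝ] G) (U : XTup L₀ n dims) :
    ν (B U U) ≤ sphereSup (fun U => ν (B U U)) * tupNorm U ^ 2 :=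
  le_sphereSup_mul_tupNorm_pow (hν.comp (B.continuous.clm_apply continuous_id)) two_ne_zero
    (fun r hr U => by simp [hνsmul, smul_smul, abs_of_nonneg hr, sq]) U

end SphereSup

section Calculus

variable {E G : Type*} [NormedAddCommGroup E] [NormedSpace ℝ E] [NormedAddCommGroup G]
  [NormedSpace ℝ G]

lemma fderiv_apply_eq_fderiv_apply_ite {ι : Type*} [Fintype ι] {F : ι → Type*}
    [∀ i, NormedAddCommGroup (F i)] [∀ i, NormedSpace ℝ (F i)] {g : (∀ i, F i) → G}
    {p : ι → Prop} [DecidablePred p] (hg : ∀ x y, (∀ i, p i → x i = y i) → g x = g y)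
    (x U : ∀ i, F i) :
    fderiv ℝ g x U = fderiv ℝ g x (fun i => if p i then U i else 0) := by
  by_cases hd : DifferentiableAt ℝ g x
  swap
  · simp [fderiv_zero_of_not_differentiableAt hd]
  set V : ∀ i, F i := U - fun i => if p i then U i else 0
  have hline : HasDerivAt (fun t : ℝ => g (x + t • V)) (fderiv ℝ g x V) 0 := by
    have h := hd.hasFDerivAt.comp_hasDerivAt_of_eq (x := (0 : ℝ))
      (((hasDerivAt_id 0).smul_const V).const_add x) (by simp)
    simpa [Function.comp_def] using h
  have hconst : (fun t : ℝ => g (x + t • V)) = fun _ => g x :=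
    funext fun t => hg _ _ fun i hi => by simp [V, hi]
  rw [hconst] at hline
  have hV : fderiv ℝ g x V = 0 := hline.unique (hasDerivAt_const 0 _)
  rw [← sub_eq_zero, ← map_sub, hV]

lemma deriv_deriv_comp {g : E → G} {y : ℝ → E} (hg : ContDiff ℝ 2 g) (hy : ContDiff ℝ 2 y)
    (t : ℝ) :
    deriv (deriv (g ∘ y)) t = fderiv ℝ (fderiv ℝ g) (y t) (deriv y t) (deriv y t)
      + fderiv ℝ g (y t) (deriv (deriv y) t) := by
  have hg1 : Differentiable ℝ g := hg.differentiable two_ne_zero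
  have hy1 : Differentiable ℝ y := hy.differentiable two_ne_zero
  have hg2 : Differentiable ℝ (fderiv ℝ g) :=
    (hg.fderiv_right (m := 1) le_rfl).differentiable one_ne_zero
  have hderiv : deriv (g ∘ y) = fun s => fderiv ℝ g (y s) (deriv y s) :=
    funext fun s => fderiv_comp_deriv s (hg1 _) (hy1 _)
  rw [hderiv]
  exact (((hg2 (y t)).hasFDerivAt.comp_hasDerivAt t (hy1 t).hasDerivAt).clm_apply
    (hy.differentiable_deriv_two t).hasDerivAt).deriv

lemma fderiv_fderiv_apply_eq_deriv_deriv_line {g : E → G} (hg : ContDiff ℝ 2 g) (x v : E) :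
    fderiv ℝ (fderiv ℝ g) x v v = deriv (deriv fun t : ℝ => g (x + t • v)) 0 := by
  have hline : deriv (fun t : ℝ => x + t • v) = fun _ => v :=
    funext fun t => by simpa using (((hasDerivAt_id t).smul_const v).const_add x).deriv
  rw [← Function.comp_def g, deriv_deriv_comp hg (by fun_prop), hline]
  simp

lemma deriv_pi_apply {ι : Type*} [Fintype ι] {F : ι → Type*}
    [∀ i, NormedAddCommGroup (F i)] [∀ i, NormedSpace ℝ (F i)] {y : ℝ → ∀ i, F i}
    (hy : Differentiable ℝ y) (t : ℝ) (i : ι) :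
    deriv y t i = deriv (fun s => y s i) t := by
  rw [deriv_pi fun i => differentiableAt_pi.1 (hy t) i]

lemma deriv_deriv_pi_apply {ι : Type*} [Fintype ι] {F : ι → Type*}
    [∀ i, NormedAddCommGroup (F i)] [∀ i, NormedSpace ℝ (F i)] {y : ℝ → ∀ i, F i}
    (hy : ContDiff ℝ 2 y) (t : ℝ) (i : ι) :
    deriv (deriv y) t i = deriv (deriv fun s => y s i) t := by
  rw [deriv_pi_apply hy.differentiable_deriv_two]
  congr 1
  exact funext fun s => deriv_pi_apply (hy.differentiable two_ne_zero) s i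

lemma abs_fderiv_fderiv_comp_apply_le {F : Type*} [NormedAddCommGroup F] [NormedSpace ℝ F]
    {f : F → ℝ} {X : E → F} {N : F → ℝ} {Jf Hf : ℝ} (hf : ContDiff ℝ 2 f) (hX : ContDiff ℝ 2 X)
    (w Δ : E) (hJf : ∀ U, |fderiv ℝ f (X w) U| ≤ Jf * N U)
    (hHf : ∀ U, |fderiv ℝ (fderiv ℝ f) (X w) U U| ≤ Hf * N U ^ 2) :
    |fderiv ℝ (fderiv ℝ (f ∘ X)) w Δ Δ| ≤ Hf * N (deriv (fun t : ℝ => X (w + t • Δ)) 0) ^ 2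
      + Jf * N (deriv (deriv fun t : ℝ => X (w + t • Δ)) 0) := by
  have hline : ContDiff ℝ 2 fun t : ℝ => X (w + t • Δ) := hX.comp (by fun_prop)
  rw [fderiv_fderiv_apply_eq_deriv_deriv_line (hf.comp hX)]
  have h := deriv_deriv_comp hf hline 0
  simp only [zero_smul, add_zero] at h
  rw [show (fun t : ℝ => (f ∘ X) (w + t • Δ)) = f ∘ fun t => X (w + t • Δ) from rfl, h]
  exact (abs_add_le _ _).trans (add_le_add (hHf _) (hJf _))

end Calculus

section MatrixCurves

variable {a b c : ℕ}

lemma hasDerivAt_matMul {M : ℝ → Fin a → Fin b → ℝ} {B : ℝ → Fin b → Fin c → ℝ}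
    {M' : Fin a → Fin b → ℝ} {B' : Fin b → Fin c → ℝ} {t : ℝ} (hM : HasDerivAt M M' t)
    (hB : HasDerivAt B B' t) :
    HasDerivAt (fun s i q => ∑ j, M s i j * B s j q)
      (fun i q => ∑ j, (M' i j * B t j q + M t i j * B' j q)) t :=
  hasDerivAt_pi.2 fun i => hasDerivAt_pi.2 fun q => HasDerivAt.fun_sum fun j _ =>
    (hasDerivAt_pi.1 (hasDerivAt_pi.1 hM i) j).mul (hasDerivAt_pi.1 (hasDerivAt_pi.1 hB j) q)

variable {W Δ : Fin a → Fin b → ℝ} {B : ℝ → Fin b → Fin c → ℝ}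

lemma deriv_affine_matMul (hB : Differentiable ℝ B) (t : ℝ) :
    deriv (fun s i q => ∑ j, (W + s • Δ) i j * B s j q) t =
      (fun i q => ∑ j, Δ i j * B t j q) + fun i q => ∑ j, (W + t • Δ) i j * deriv B t j q := by
  have hM : HasDerivAt (fun s : ℝ => W + s • Δ) Δ t := by
    simpa using ((hasDerivAt_id t).smul_const Δ).const_add W
  rw [(hasDerivAt_matMul hM (hB t).hasDerivAt).deriv]
  funext i q
  simp [sum_add_distrib]

lemma deriv_deriv_affine_matMul (hB : ContDiff ℝ 2 B) :
    deriv (deriv fun s i q => ∑ j, (W + s • Δ) i j * B s j q) 0 =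
      (2 : ℝ) • (fun i q => ∑ j, Δ i j * deriv B 0 j q)
        + fun i q => ∑ j, W i j * deriv (deriv B) 0 j q := by
  rw [funext (deriv_affine_matMul (hB.differentiable two_ne_zero))]
  have hM : HasDerivAt (fun s : ℝ => W + s • Δ) Δ 0 := by
    simpa using ((hasDerivAt_id (0 : ℝ)).smul_const Δ).const_add W
  have hB' := (hB.differentiable_deriv_two 0).hasDerivAt
  rw [((hasDerivAt_matMul (hasDerivAt_const 0 Δ)
    (hB.differentiable two_ne_zero 0).hasDerivAt).fun_add (hasDerivAt_matMul hM hB')).deriv]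
  funext i q
  simp [sum_add_distrib, two_mul, add_assoc]

end MatrixCurves

section DiscreteGronwall

lemma sum_le_pow_mul_sum_of_le_add_mul_sum_Iio {m : ℕ} {x b : Fin (m + 1) → ℝ} {K : ℝ}
    (hK : 0 ≤ K) (hb : ∀ k, 0 ≤ b k) (hx : ∀ k, x k ≤ b k + K * ∑ j ∈ Iio k, x j) :
    ∑ k, x k ≤ (1 + K) ^ m * ∑ k, b k := by
  induction m with
  | zero =>
    have hempty : Iio (0 : Fin 1) = ∅ := by decide
    simpa [hempty] using hx 0
  | succ m ih =>
    have hprefix :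
        ∑ k : Fin (m + 1), x k.castSucc ≤ (1 + K) ^ m * ∑ k : Fin (m + 1), b k.castSucc :=
      ih (fun k => hb _) fun k => by
        simpa [← Fin.map_castSuccEmb_Iio, sum_map] using hx k.castSucc
    have hlast : x (Fin.last _) ≤ b (Fin.last _) + K * ∑ k : Fin (m + 1), x k.castSucc := by
      simpa [Fin.Iio_last_eq_map, sum_map] using hx (Fin.last _)
    have hpow : 1 ≤ (1 + K) * (1 + K) ^ m := by
      rw [← pow_succ']; exact one_le_pow₀ (by linarith)
    rw [Fin.sum_univ_castSucc (f := x), Fin.sum_univ_castSucc (f := b), pow_succ']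
    linarith [mul_le_mul_of_nonneg_right hpow (hb (Fin.last _)),
      mul_le_mul_of_nonneg_left hprefix (by linarith : 0 ≤ 1 + K)]

lemma sum_sq_le_of_le_add_mul_sqrt_sum_Iio {m : ℕ} {p α : Fin (m + 1) → ℝ} {K : ℝ}
    (hp : ∀ k, 0 ≤ p k) (h : ∀ k, p k ≤ α k + K * √(∑ j ∈ Iio k, p j ^ 2)) :
    ∑ k, p k ^ 2 ≤ 2 * (1 + 2 * K ^ 2) ^ m * ∑ k, α k ^ 2 := by
  have hstep (k : Fin (m + 1)) :
      p k ^ 2 ≤ 2 * α k ^ 2 + 2 * K ^ 2 * ∑ j ∈ Iio k, p j ^ 2 := by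
    have hS := Real.sq_sqrt (sum_nonneg fun j (_ : j ∈ Iio k) => sq_nonneg (p j))
    nlinarith [pow_le_pow_left₀ (hp k) (h k) 2, sq_nonneg (α k - K * √(∑ j ∈ Iio k, p j ^ 2))]
  calc ∑ k, p k ^ 2 ≤ (1 + 2 * K ^ 2) ^ m * ∑ k, 2 * α k ^ 2 :=
        sum_le_pow_mul_sum_of_le_add_mul_sum_Iio (by positivity) (fun k => by positivity) hstep
    _ = _ := by rw [← mul_sum]; ring

end DiscreteGronwall

lemma sqrt_two_mul_rpow_sq {b : ℝ} (hb : 0 ≤ b) (m : ℕ) :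
    (√2 * b ^ (((m : ℝ) + 1) / 2)) ^ 2 = 2 * b ^ (m + 1) := by
  rw [mul_pow, Real.sq_sqrt zero_le_two, ← Real.rpow_natCast (b ^ _), ← Real.rpow_mul hb,
    show ((m : ℝ) + 1) / 2 * (2 : ℕ) = ((m + 1 : ℕ) : ℝ) by push_cast; ring, Real.rpow_natCast]

lemma abs_le_of_tangent_bounds {m : ℕ} {β : Fin (m + 1) → ℝ} {Q σ τ S Jf Hf J H Wst Γ Θ : ℝ}
    (hJf : 0 ≤ Jf) (hHf : 0 ≤ Hf) (hH : 0 ≤ H) (hWst : 0 ≤ Wst) (hΘ : 0 ≤ Θ)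
    (hQ : |Q| ≤ Hf * σ ^ 2 + Jf * τ) (hτ : τ ≤ Θ * ∑ ℓ, (2 * β ℓ * J * σ + Wst * H * σ ^ 2))
    (hσ : σ ^ 2 ≤ Γ ^ 2 * S) :
    |Q| ≤ (Γ ^ 2 * Hf + Jf * Θ * Wst * H * Γ ^ 2 * ((m : ℝ) + 1)
      + Jf ^ 2 * Θ * Γ ^ 2 * ((m : ℝ) + 1)) * S + Θ * J ^ 2 * ∑ ℓ, β ℓ ^ 2 := by
  set c := Jf ^ 2 + Jf * Wst * H
  have hamgm (ℓ : Fin (m + 1)) :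
      Jf * (2 * β ℓ * J * σ + Wst * H * σ ^ 2) ≤ c * σ ^ 2 + J ^ 2 * β ℓ ^ 2 := by
    nlinarith [sq_nonneg (Jf * σ - J * β ℓ)]
  have hτ' : Jf * τ ≤ Θ * (((m : ℝ) + 1) * (c * σ ^ 2) + J ^ 2 * ∑ ℓ, β ℓ ^ 2) :=
    calc Jf * τ ≤ Θ * ∑ ℓ, Jf * (2 * β ℓ * J * σ + Wst * H * σ ^ 2) := by
          rw [← mul_sum]; nlinarith [mul_le_mul_of_nonneg_left hτ hJf]
      _ ≤ Θ * ∑ ℓ, (c * σ ^ 2 + J ^ 2 * β ℓ ^ 2) := by gcongr with ℓ; exact hamgm ℓ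
      _ = _ := by simp [sum_add_distrib, ← mul_sum]
  have hcoef : 0 ≤ Hf + Θ * ((m : ℝ) + 1) * c :=
    add_nonneg hHf (mul_nonneg (mul_nonneg hΘ (by positivity))
      (add_nonneg (sq_nonneg _) (mul_nonneg (mul_nonneg hJf hWst) hH)))
  calc |Q| ≤ (Hf + Θ * ((m : ℝ) + 1) * c) * σ ^ 2 + Θ * J ^ 2 * ∑ ℓ, β ℓ ^ 2 := by linarith
    _ ≤ (Hf + Θ * ((m : ℝ) + 1) * c) * (Γ ^ 2 * S) + Θ * J ^ 2 * ∑ ℓ, β ℓ ^ 2 := by gcongr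
    _ = _ := by ring

section ForwardPass

variable {L₀ n : ℕ} {dims : Fin (L₀ + 2) → ℕ}

def IsCausal (Φ : (ℓ : Fin (L₀ + 1)) → XTup L₀ n dims → (Fin (dims ℓ.succ) → Fin n → ℝ)) :
    Prop :=
  ∀ ℓ x y, (∀ i, i ≤ ℓ → x i = y i) → Φ ℓ x = Φ ℓ y

/-- The preactivations `X` and activations `A` of the network with input `A₀`, when the weights
`wt p` depend on a parameter `p`: `wt = id` is the network itself, and `wt t = W + t • ΔW` its
restriction to a line. -/
structure IsForwardPass {P : Type*} (A₀ : Fin (dims 0) → Fin n → ℝ)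
    (Φ : (ℓ : Fin (L₀ + 1)) → XTup L₀ n dims → (Fin (dims ℓ.succ) → Fin n → ℝ))
    (wt : P → WTup L₀ dims) (X : P → XTup L₀ n dims)
    (A : P → ∀ κ : Fin (L₀ + 2), Fin (dims κ) → Fin n → ℝ) : Prop where
  act_zero : ∀ p, A p 0 = A₀
  preact_apply : ∀ p ℓ i q, X p ℓ i q = ∑ j, wt p ℓ i j * A p ℓ.castSucc j q
  act_succ : ∀ p ℓ, A p ℓ.succ = Φ ℓ (X p)

namespace IsForwardPass

variable {A₀ : Fin (dims 0) → Fin n → ℝ}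
  {Φ : (ℓ : Fin (L₀ + 1)) → XTup L₀ n dims → (Fin (dims ℓ.succ) → Fin n → ℝ)}

section Parametrized

variable {P : Type*} {wt : P → WTup L₀ dims} {X : P → XTup L₀ n dims}
  {A : P → ∀ κ : Fin (L₀ + 2), Fin (dims κ) → Fin n → ℝ}

lemma comp (h : IsForwardPass A₀ Φ wt X A) {Q : Type*} (g : Q → P) :
    IsForwardPass A₀ Φ (wt ∘ g) (X ∘ g) (A ∘ g) :=
  ⟨fun q => h.act_zero (g q), fun q => h.preact_apply (g q), fun q => h.act_succ (g q)⟩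

lemma preact_eq (h : IsForwardPass A₀ Φ wt X A) (p : P) (ℓ : Fin (L₀ + 1)) :
    X p ℓ = fun i q => ∑ j, wt p ℓ i j * A p ℓ.castSucc j q :=
  funext₂ (h.preact_apply p ℓ)

section Smoothness

variable [NormedAddCommGroup P] [NormedSpace ℝ P] {k : WithTop ℕ∞}

lemma contDiff_preact_apply (h : IsForwardPass A₀ Φ wt X A) (hwt : ContDiff ℝ k wt)
    {ℓ : Fin (L₀ + 1)} (hA : ContDiff ℝ k fun p => A p ℓ.castSucc) :
    ContDiff ℝ k fun p => X p ℓ := by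
  simp only [h.preact_eq]
  exact contDiff_pi.2 fun i => contDiff_pi.2 fun q => ContDiff.sum fun j _ =>
    (contDiff_pi.1 (contDiff_pi.1 (contDiff_pi.1 hwt ℓ) i) j).mul
      (contDiff_pi.1 (contDiff_pi.1 hA j) q)

lemma contDiff_act (h : IsForwardPass A₀ Φ wt X A) (hcausal : IsCausal Φ)
    (hΦ : ∀ ℓ, ContDiff ℝ k (Φ ℓ)) (hwt : ContDiff ℝ k wt) (κ : Fin (L₀ + 2)) :
    ContDiff ℝ k fun p => A p κ := by
  suffices ∀ κ' ≤ κ, ContDiff ℝ k fun p => A p κ' from this κ le_rfl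
  induction κ using Fin.induction with
  | zero =>
    intro κ' hκ'
    rw [Fin.le_zero_iff.1 hκ']
    simpa [h.act_zero] using contDiff_const
  | succ ℓ ih =>
    intro κ' hκ'
    rcases hκ'.lt_or_eq with hlt | rfl
    · exact ih κ' (Fin.le_castSucc_iff.2 hlt)
    have htrunc : (fun p => A p ℓ.succ) =
        fun p => Φ ℓ (fun i => if i ≤ ℓ then X p i else 0) :=
      funext fun p => (h.act_succ p ℓ).trans (hcausal ℓ _ _ fun i hi => by simp [hi])
    rw [htrunc]
    refine (hΦ ℓ).comp (contDiff_pi.2 fun i => ?_)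
    split_ifs with hi
    · exact h.contDiff_preact_apply hwt (ih _ hi)
    · exact contDiff_const

lemma contDiff_preact (h : IsForwardPass A₀ Φ wt X A) (hcausal : IsCausal Φ)
    (hΦ : ∀ ℓ, ContDiff ℝ k (Φ ℓ)) (hwt : ContDiff ℝ k wt) : ContDiff ℝ k X :=
  contDiff_pi.2 fun _ => h.contDiff_preact_apply hwt (h.contDiff_act hcausal hΦ hwt _)

end Smoothness

end Parametrized

section Curve

variable {wt : ℝ → WTup L₀ dims} {x : ℝ → XTup L₀ n dims}
  {a : ℝ → ∀ κ : Fin (L₀ + 2), Fin (dims κ) → Fin n → ℝ}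

lemma deriv_act_zero (h : IsForwardPass A₀ Φ wt x a) : deriv (fun t => a t 0) = 0 :=
  funext fun t => by simp [h.act_zero]

lemma deriv_act_succ (h : IsForwardPass A₀ Φ wt x a) {ℓ : Fin (L₀ + 1)}
    (hΦ : Differentiable ℝ (Φ ℓ)) (hx : Differentiable ℝ x) (t : ℝ) :
    deriv (fun t => a t ℓ.succ) t = fderiv ℝ (Φ ℓ) (x t) (deriv x t) := by
  simp only [h.act_succ]
  exact fderiv_comp_deriv t (hΦ _) (hx t)

lemma deriv_deriv_act_succ (h : IsForwardPass A₀ Φ wt x a) {ℓ : Fin (L₀ + 1)}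
    (hΦ : ContDiff ℝ 2 (Φ ℓ)) (hx : ContDiff ℝ 2 x) (t : ℝ) :
    deriv (deriv fun t => a t ℓ.succ) t =
      fderiv ℝ (fderiv ℝ (Φ ℓ)) (x t) (deriv x t) (deriv x t)
        + fderiv ℝ (Φ ℓ) (x t) (deriv (deriv x) t) := by
  simp only [h.act_succ]
  exact deriv_deriv_comp hΦ hx t

lemma matFrobNorm_deriv_act_le (h : IsForwardPass A₀ Φ wt x a) (hcausal : IsCausal Φ)
    (hΦ : ∀ ℓ, Differentiable ℝ (Φ ℓ)) (hx : Differentiable ℝ x) {J : ℝ} (hJ0 : 0 ≤ J)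
    (hJ : ∀ ℓ U, matFrobNorm (fderiv ℝ (Φ ℓ) (x 0) U) ≤ J * tupNorm U) (κ : Fin (L₀ + 2)) :
    matFrobNorm (deriv (fun t => a t κ) 0) ≤
      J * tupNorm (fun i => if i.castSucc < κ then deriv x 0 i else 0) := by
  cases κ using Fin.cases with
  | zero => simpa [h.deriv_act_zero, matFrobNorm] using mul_nonneg hJ0 (tupNorm_nonneg _)
  | succ ℓ =>
    rw [h.deriv_act_succ (hΦ ℓ) hx, fderiv_apply_eq_fderiv_apply_ite
      (p := fun i => i.castSucc < ℓ.succ) fun y z hyz =>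
        hcausal ℓ y z fun i hi => hyz i (Fin.castSucc_lt_succ_iff.2 hi)]
    exact hJ ℓ _

lemma matFrobNorm_deriv_deriv_act_le (h : IsForwardPass A₀ Φ wt x a) (hcausal : IsCausal Φ)
    (hΦ : ∀ ℓ, ContDiff ℝ 2 (Φ ℓ)) (hx : ContDiff ℝ 2 x) {J H : ℝ} (hJ0 : 0 ≤ J) (hH0 : 0 ≤ H)
    (hJ : ∀ ℓ U, matFrobNorm (fderiv ℝ (Φ ℓ) (x 0) U) ≤ J * tupNorm U)
    (hH : ∀ ℓ U, matFrobNorm (fderiv ℝ (fderiv ℝ (Φ ℓ)) (x 0) U U) ≤ H * tupNorm U ^ 2)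
    (κ : Fin (L₀ + 2)) :
    matFrobNorm (deriv (deriv fun t => a t κ) 0) ≤ H * tupNorm (deriv x 0) ^ 2
      + J * tupNorm (fun i => if i.castSucc < κ then deriv (deriv x) 0 i else 0) := by
  cases κ using Fin.cases with
  | zero =>
    simpa [h.deriv_act_zero, matFrobNorm] using
      add_nonneg (mul_nonneg hH0 (sq_nonneg _)) (mul_nonneg hJ0 (tupNorm_nonneg _))
  | succ ℓ =>
    rw [h.deriv_deriv_act_succ (hΦ ℓ) hx, fderiv_apply_eq_fderiv_apply_ite
      (p := fun i => i.castSucc < ℓ.succ) (g := Φ ℓ) fun y z hyz =>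
        hcausal ℓ y z fun i hi => hyz i (Fin.castSucc_lt_succ_iff.2 hi)]
    exact (matFrobNorm_add_le _ _).trans (add_le_add (hH ℓ _) (hJ ℓ _))

variable {W ΔW : WTup L₀ dims} {J H Wst : ℝ}

lemma deriv_preact (h : IsForwardPass A₀ Φ (fun t => W + t • ΔW) x a) (hx : Differentiable ℝ x)
    {ℓ : Fin (L₀ + 1)} (ha : Differentiable ℝ fun t => a t ℓ.castSucc) :
    deriv x 0 ℓ = (fun i q => ∑ j, ΔW ℓ i j * a 0 ℓ.castSucc j q)
      + fun i q => ∑ j, W ℓ i j * deriv (fun t => a t ℓ.castSucc) 0 j q := by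
  rw [deriv_pi_apply hx, funext fun t => h.preact_eq t ℓ]
  simpa using deriv_affine_matMul (W := W ℓ) (Δ := ΔW ℓ) ha 0

lemma deriv_deriv_preact (h : IsForwardPass A₀ Φ (fun t => W + t • ΔW) x a)
    (hx : ContDiff ℝ 2 x) {ℓ : Fin (L₀ + 1)} (ha : ContDiff ℝ 2 fun t => a t ℓ.castSucc) :
    deriv (deriv x) 0 ℓ =
      (2 : ℝ) • (fun i q => ∑ j, ΔW ℓ i j * deriv (fun t => a t ℓ.castSucc) 0 j q)
      + fun i q => ∑ j, W ℓ i j * deriv (deriv fun t => a t ℓ.castSucc) 0 j q := by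
  rw [deriv_deriv_pi_apply hx, funext fun t => h.preact_eq t ℓ]
  exact deriv_deriv_affine_matMul (W := W ℓ) (Δ := ΔW ℓ) ha

theorem tupNorm_deriv_sq_le (h : IsForwardPass A₀ Φ (fun t => W + t • ΔW) x a)
    (hcausal : IsCausal Φ) (hΦ : ∀ ℓ, Differentiable ℝ (Φ ℓ)) (hx : Differentiable ℝ x)
    (ha : ∀ κ, Differentiable ℝ fun t => a t κ) (hJ0 : 0 ≤ J)
    (hJ : ∀ ℓ U, matFrobNorm (fderiv ℝ (Φ ℓ) (x 0) U) ≤ J * tupNorm U)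
    (hW : ∀ ℓ, opNormM (Matrix.of (W ℓ)) ≤ Wst) :
    tupNorm (deriv x 0) ^ 2 ≤ 2 * (1 + 2 * J ^ 2 * Wst ^ 2) ^ (L₀ + 1)
      * ∑ ℓ, matFrobNorm (fun i q => ∑ j, ΔW ℓ i j * a 0 ℓ.castSucc j q) ^ 2 := by
  have hWst : 0 ≤ Wst := (opNormM_nonneg _).trans (hW 0)
  have hlayer (ℓ : Fin (L₀ + 1)) : matFrobNorm (deriv x 0 ℓ) ≤
      matFrobNorm (fun i q => ∑ j, ΔW ℓ i j * a 0 ℓ.castSucc j q)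
        + Wst * J * √(∑ k ∈ Iio ℓ, matFrobNorm (deriv x 0 k) ^ 2) := by
    have hact := h.matFrobNorm_deriv_act_le hcausal hΦ hx hJ0 hJ ℓ.castSucc
    simp only [Fin.castSucc_lt_castSucc_iff] at hact
    rw [h.deriv_preact hx (ha _), ← tupNorm_ite_lt_sq, Real.sqrt_sq (tupNorm_nonneg _)]
    refine (matFrobNorm_add_le _ _).trans (add_le_add_right ?_ _)
    calc _ ≤ opNormM (Matrix.of (W ℓ)) * matFrobNorm (deriv (fun t => a t ℓ.castSucc) 0) :=
          matFrobNorm_mul_le _ _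
      _ ≤ Wst * (J * tupNorm fun k => if k < ℓ then deriv x 0 k else 0) :=
          mul_le_mul (hW ℓ) hact (matFrobNorm_nonneg _) hWst
      _ = _ := by ring
  have hpow : (1 + 2 * (Wst * J) ^ 2) ^ L₀ ≤ (1 + 2 * J ^ 2 * Wst ^ 2) ^ (L₀ + 1) := by
    rw [show 2 * (Wst * J) ^ 2 = 2 * J ^ 2 * Wst ^ 2 by ring]
    exact pow_le_pow_right₀ (le_add_of_nonneg_right (by positivity)) L₀.le_succ
  rw [tupNorm_sq]
  refine (sum_sq_le_of_le_add_mul_sqrt_sum_Iio (fun ℓ => matFrobNorm_nonneg _) hlayer).trans ?_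
  gcongr

theorem tupNorm_deriv_deriv_le (h : IsForwardPass A₀ Φ (fun t => W + t • ΔW) x a)
    (hcausal : IsCausal Φ) (hΦ : ∀ ℓ, ContDiff ℝ 2 (Φ ℓ)) (hx : ContDiff ℝ 2 x)
    (ha : ∀ κ, ContDiff ℝ 2 fun t => a t κ) (hJ0 : 0 ≤ J) (hH0 : 0 ≤ H)
    (hJ : ∀ ℓ U, matFrobNorm (fderiv ℝ (Φ ℓ) (x 0) U) ≤ J * tupNorm U)
    (hH : ∀ ℓ U, matFrobNorm (fderiv ℝ (fderiv ℝ (Φ ℓ)) (x 0) U U) ≤ H * tupNorm U ^ 2)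
    (hW : ∀ ℓ, opNormM (Matrix.of (W ℓ)) ≤ Wst) :
    tupNorm (deriv (deriv x) 0) ≤ (1 + J * Wst) ^ L₀ * ∑ ℓ,
      (2 * opNormM (Matrix.of (ΔW ℓ)) * J * tupNorm (deriv x 0)
        + Wst * H * tupNorm (deriv x 0) ^ 2) := by
  have hWst : 0 ≤ Wst := (opNormM_nonneg _).trans (hW 0)
  have hΦ1 (ℓ) : Differentiable ℝ (Φ ℓ) := (hΦ ℓ).differentiable two_ne_zero
  set σ := tupNorm (deriv x 0)
  have hlayer (ℓ : Fin (L₀ + 1)) : matFrobNorm (deriv (deriv x) 0 ℓ) ≤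
      (2 * opNormM (Matrix.of (ΔW ℓ)) * J * σ + Wst * H * σ ^ 2)
        + J * Wst * ∑ k ∈ Iio ℓ, matFrobNorm (deriv (deriv x) 0 k) := by
    have hd : matFrobNorm (deriv (fun t => a t ℓ.castSucc) 0) ≤ J * σ :=
      (h.matFrobNorm_deriv_act_le hcausal hΦ1 (hx.differentiable two_ne_zero) hJ0 hJ _).trans
        (mul_le_mul_of_nonneg_left (tupNorm_ite_le _ _) hJ0)
    have he : matFrobNorm (deriv (deriv fun t => a t ℓ.castSucc) 0) ≤
        H * σ ^ 2 + J * ∑ k ∈ Iio ℓ, matFrobNorm (deriv (deriv x) 0 k) := by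
      have hact := h.matFrobNorm_deriv_deriv_act_le hcausal hΦ hx hJ0 hH0 hJ hH ℓ.castSucc
      simp only [Fin.castSucc_lt_castSucc_iff] at hact
      exact hact.trans (add_le_add_right
        (mul_le_mul_of_nonneg_left (tupNorm_ite_lt_le_sum _ _) hJ0) _)
    rw [h.deriv_deriv_preact hx (ha _)]
    refine (matFrobNorm_add_le _ _).trans ?_
    rw [matFrobNorm_smul, abs_two]
    calc _ ≤ 2 * (opNormM (Matrix.of (ΔW ℓ)) * (J * σ)) + Wst * (H * σ ^ 2
          + J * ∑ k ∈ Iio ℓ, matFrobNorm (deriv (deriv x) 0 k)) := by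
          gcongr
          · exact (matFrobNorm_mul_le _ _).trans
              (mul_le_mul_of_nonneg_left hd (opNormM_nonneg _))
          · exact (matFrobNorm_mul_le _ _).trans
              (mul_le_mul (hW ℓ) he (matFrobNorm_nonneg _) hWst)
      _ = _ := by ring
  exact (tupNorm_le_sum _).trans (sum_le_pow_mul_sum_of_le_add_mul_sum_Iio
    (mul_nonneg hJ0 hWst) (fun ℓ => add_nonneg
      (mul_nonneg (mul_nonneg (mul_nonneg zero_le_two (opNormM_nonneg _)) hJ0) (tupNorm_nonneg _))
      (mul_nonneg (mul_nonneg hWst hH0) (sq_nonneg _))) hlayer)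

end Curve

theorem abs_fderiv_fderiv_comp_le {X : WTup L₀ dims → XTup L₀ n dims}
    {A : WTup L₀ dims → ∀ κ : Fin (L₀ + 2), Fin (dims κ) → Fin n → ℝ}
    (h : IsForwardPass A₀ Φ id X A) (hcausal : IsCausal Φ) (hΦ : ∀ ℓ, ContDiff ℝ 2 (Φ ℓ))
    {f : XTup L₀ n dims → ℝ} (hf : ContDiff ℝ 2 f) (W ΔW : WTup L₀ dims)
    {J H Jf Hf Wst Γ Θ : ℝ} (hJ0 : 0 ≤ J) (hH0 : 0 ≤ H) (hJf0 : 0 ≤ Jf) (hHf0 : 0 ≤ Hf)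
    (hJ : ∀ ℓ U, matFrobNorm (fderiv ℝ (Φ ℓ) (X W) U) ≤ J * tupNorm U)
    (hH : ∀ ℓ U, matFrobNorm (fderiv ℝ (fderiv ℝ (Φ ℓ)) (X W) U U) ≤ H * tupNorm U ^ 2)
    (hJf : ∀ U, |fderiv ℝ f (X W) U| ≤ Jf * tupNorm U)
    (hHf : ∀ U, |fderiv ℝ (fderiv ℝ f) (X W) U U| ≤ Hf * tupNorm U ^ 2)
    (hW : ∀ ℓ, opNormM (Matrix.of (W ℓ)) ≤ Wst)
    (hΓ : Γ ^ 2 = 2 * (1 + 2 * J ^ 2 * Wst ^ 2) ^ (L₀ + 1)) (hΘ : Θ = (1 + J * Wst) ^ L₀) :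
    |fderiv ℝ (fderiv ℝ (f ∘ X)) W ΔW ΔW| ≤
      (Γ ^ 2 * Hf + Jf * Θ * Wst * H * Γ ^ 2 * ((L₀ : ℝ) + 1)
        + Jf ^ 2 * Θ * Γ ^ 2 * ((L₀ : ℝ) + 1))
          * ∑ ℓ, matFrobNorm (fun i q => ∑ j, ΔW ℓ i j * A W ℓ.castSucc j q) ^ 2
        + Θ * J ^ 2 * ∑ ℓ, opNormM (Matrix.of (ΔW ℓ)) ^ 2 := by
  have hline := h.comp fun t : ℝ => W + t • ΔW
  have hlineC : ContDiff ℝ 2 (id ∘ fun t : ℝ => W + t • ΔW) := by fun_prop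
  have hx := hline.contDiff_preact hcausal hΦ hlineC
  have ha := hline.contDiff_act hcausal hΦ hlineC
  have hx0 : (X ∘ fun t : ℝ => W + t • ΔW) 0 = X W := by simp
  have hWst : 0 ≤ Wst := (opNormM_nonneg _).trans (hW 0)
  have hσ := hline.tupNorm_deriv_sq_le hcausal (fun ℓ => (hΦ ℓ).differentiable two_ne_zero)
    (hx.differentiable two_ne_zero) (fun κ => (ha κ).differentiable two_ne_zero) hJ0
    (hx0 ▸ hJ) hW
  have hτ := hline.tupNorm_deriv_deriv_le hcausal hΦ hx ha hJ0 hH0 (hx0 ▸ hJ) (hx0 ▸ hH) hW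
  have hh := abs_fderiv_fderiv_comp_apply_le hf (h.contDiff_preact hcausal hΦ contDiff_id) W ΔW
    hJf hHf
  convert abs_le_of_tangent_bounds hJf0 hHf0 hH0 hWst
    (hΘ ▸ pow_nonneg (add_nonneg zero_le_one (mul_nonneg hJ0 hWst)) _) hh (hΘ ▸ hτ)
    (hΓ ▸ hσ) using 5
  simp

end IsForwardPass

end ForwardPass

/-- Layerwise Hessian bound: for the layered model
`X_ℓ(W) = W_ℓ A_{ℓ−1}(W)`, `A_ℓ(W) = Φ_ℓ(X_1(W),…,X_ℓ(W))`, `𝓛(W) = f(X_1(W),…,X_L(W))`, the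
Hessian quadratic form of `𝓛` at a fixed `W` satisfies
`|⟨ΔW, ∇²𝓛(W)·ΔW⟩| ≤ C_F·Σ_ℓ ‖ΔW_ℓ A_{ℓ−1}(W)‖_F² + C_op·Σ_ℓ ‖ΔW_ℓ‖_op²`
with `C_F = Γ²H_f + J_f Θ W_* H_Φ Γ² L + J_f² Θ Γ² L` and `C_op = Θ J_Φ²`, where the numbers
of layers is `L = L₀ + 1`, `Γ = √2(1+2J_Φ²W_*²)^{L/2}` and `Θ = (1+J_Φ W_*)^{L−1}`. -/
theorem layered_hessian_bound
    (L₀ n : ℕ) (dims : Fin (L₀ + 2) → ℕ)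
    (A₀ : Fin (dims 0) → Fin n → ℝ)
    (Φ : (ℓ : Fin (L₀ + 1)) → XTup L₀ n dims → (Fin (dims ℓ.succ) → Fin n → ℝ))
    (hΦdep : ∀ (ℓ : Fin (L₀ + 1)) (x y : XTup L₀ n dims),
      (∀ i : Fin (L₀ + 1), i ≤ ℓ → x i = y i) → Φ ℓ x = Φ ℓ y)
    (hΦsmooth : ∀ ℓ, ContDiff ℝ 2 (Φ ℓ))
    (f : XTup L₀ n dims → ℝ) (hf : ContDiff ℝ 2 f)
    (Xfun : WTup L₀ dims → XTup L₀ n dims)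
    (Afun : WTup L₀ dims → ∀ ℓ : Fin (L₀ + 2), Fin (dims ℓ) → Fin n → ℝ)
    (hA0 : ∀ w, Afun w 0 = A₀)
    (hXdef : ∀ w (ℓ : Fin (L₀ + 1)) i t,
      Xfun w ℓ i t = ∑ j, w ℓ i j * Afun w ℓ.castSucc j t)
    (hAdef : ∀ w (ℓ : Fin (L₀ + 1)), Afun w ℓ.succ = Φ ℓ (Xfun w))
    (lossL : WTup L₀ dims → ℝ)
    (hloss : ∀ w, lossL w = f (Xfun w))
    (W : WTup L₀ dims)
    (JΦ HΦ : Fin (L₀ + 1) → ℝ)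
    (hJΦ : ∀ ℓ, JΦ ℓ = sSup ((fun U : XTup L₀ n dims =>
      matFrobNorm (fderiv ℝ (Φ ℓ) (Xfun W) U)) '' {U | tupNorm U = 1}))
    (hHΦ : ∀ ℓ, HΦ ℓ = sSup ((fun U : XTup L₀ n dims =>
      matFrobNorm ((fderiv ℝ (fderiv ℝ (Φ ℓ)) (Xfun W) U) U)) '' {U | tupNorm U = 1}))
    (Jf Hf JΦm HΦm Wstar Γ Θ CF Cop : ℝ)
    (hJf : Jf = sSup ((fun U : XTup L₀ n dims =>
      |fderiv ℝ f (Xfun W) U|) '' {U | tupNorm U = 1}))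
    (hHf : Hf = sSup ((fun U : XTup L₀ n dims =>
      |(fderiv ℝ (fderiv ℝ f) (Xfun W) U) U|) '' {U | tupNorm U = 1}))
    (hJΦm : JΦm = ⨆ ℓ, JΦ ℓ)
    (hHΦm : HΦm = ⨆ ℓ, HΦ ℓ)
    (hWstar : Wstar = ⨆ ℓ, opNormM (Matrix.of (W ℓ)))
    (hΓ : Γ = Real.sqrt 2 * (1 + 2 * JΦm ^ 2 * Wstar ^ 2) ^ (((L₀ : ℝ) + 1) / 2))
    (hΘ : Θ = (1 + JΦm * Wstar) ^ L₀)
    (hCF : CF = Γ ^ 2 * Hf + Jf * Θ * Wstar * HΦm * Γ ^ 2 * ((L₀ : ℝ) + 1)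
      + Jf ^ 2 * Θ * Γ ^ 2 * ((L₀ : ℝ) + 1))
    (hCop : Cop = Θ * JΦm ^ 2) :
    ∀ ΔW : WTup L₀ dims,
      |(fderiv ℝ (fderiv ℝ lossL) W ΔW) ΔW| ≤
        CF * (∑ ℓ : Fin (L₀ + 1), ∑ i, ∑ t,
            (∑ j, ΔW ℓ i j * Afun W ℓ.castSucc j t) ^ 2)
          + Cop * ∑ ℓ : Fin (L₀ + 1), (opNormM (Matrix.of (ΔW ℓ))) ^ 2 := by
  intro ΔW
  have hW (ℓ) : opNormM (Matrix.of (W ℓ)) ≤ Wstar :=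
    hWstar ▸ le_ciSup (f := fun ℓ => opNormM (Matrix.of (W ℓ))) (Set.finite_range _).bddAbove ℓ
  obtain ⟨hJ0, hJ⟩ := iSup_sphereSup_nonneg_and_le_mul (fun _ _ => matFrobNorm_nonneg _)
    tupNorm_nonneg (fun ℓ => apply_le_sphereSup_mul continuous_matFrobNorm matFrobNorm_smul
      (fderiv ℝ (Φ ℓ) (Xfun W))) hJΦ hJΦm
  obtain ⟨hH0, hH⟩ := iSup_sphereSup_nonneg_and_le_mul (fun _ _ => matFrobNorm_nonneg _)
    (fun U => sq_nonneg (tupNorm U)) (fun ℓ => apply_apply_le_sphereSup_mul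
      continuous_matFrobNorm matFrobNorm_smul (fderiv ℝ (fderiv ℝ (Φ ℓ)) (Xfun W))) hHΦ hHΦm
  have hfJ (U) : |fderiv ℝ f (Xfun W) U| ≤ Jf * tupNorm U :=
    hJf ▸ apply_le_sphereSup_mul continuous_abs (fun r y => abs_mul r y) _ U
  have hfH (U) : |fderiv ℝ (fderiv ℝ f) (Xfun W) U U| ≤ Hf * tupNorm U ^ 2 :=
    hHf ▸ apply_apply_le_sphereSup_mul continuous_abs (fun r y => abs_mul r y) _ U
  have hnet : IsForwardPass A₀ Φ id Xfun Afun := ⟨hA0, hXdef, hAdef⟩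
  rw [hCF, hCop, show lossL = f ∘ Xfun from funext hloss]
  convert hnet.abs_fderiv_fderiv_comp_le hΦdep hΦsmooth hf W ΔW hJ0 hH0
    (hJf ▸ sphereSup_nonneg fun _ => abs_nonneg _) (hHf ▸ sphereSup_nonneg fun _ => abs_nonneg _)
    hJ hH hfJ hfH hW (hΓ ▸ sqrt_two_mul_rpow_sq (by positivity) L₀) hΘ using 3
  simp [matFrobNorm_sq]
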